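/- arXiv:1608.06560 — 3 statements merged into one kernel-verified Lean document; each statement's English description precedes it below -/
import Mathlib

section
/- Consider the two-interacting Glauber models: let s ∈ [0, 1/2], z⁺, z⁻ > 0, and let ψ⁺, ψ⁻, φ⁺, φ⁻ : ℝ^d → [0,∞) be symmetric (f(−x) = f(x)) and integrable. Fix α, β ∈ ℝ and for a two-component finite configuration η = (η⁺, η⁻) set M(η) = Σ_{x∈η⁻} e^{−s·E_{ψ⁺}(x, η⁺)} + Σ_{x∈η⁺} e^{−s·E_{ψ⁻}(x, η⁻)} and c(η) = e^{e^α C(sψ⁺)} Σ_{x∈η⁻} e^{−s·E_{ψ⁺}(x,η⁺)} + e^{e^β C(sψ⁻)} Σ_{x∈η⁺} e^{−s·E_{ψ⁻}(x,η⁻)} + e^{−β} z⁻ e^{e^α C((1−s)ψ⁺)} e^{e^β C(φ⁻)} Σ_{x∈η⁻} e^{−(1−s)·E_{ψ⁺}(x,η⁺)} e^{−E_{φ⁻}(x, η⁻∖{x})} + e^{−α} z⁺ e^{e^β C((1−s)ψ⁻)} e^{e^α C(φ⁺)} Σ_{x∈η⁺} e^{−(1−s)·E_{ψ⁻}(x,η⁻)}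 e^{−E_{φ⁺}(x, η⁺∖{x})}. Assume e^{e^α C(sψ⁺)} + e^{−β} z⁻ e^{e^α C((1−s)ψ⁺)} e^{e^β C(φ⁻)} < 2 and e^{e^β C(sψ⁻)} + e^{−α} z⁺ e^{e^β C((1−s)ψ⁻)} e^{e^α C(φ⁺)} < 2. Then there exists a constant a ∈ (0,2) such that c(η) ≤ a·M(η) for every two-component finite configuration η = (η⁺, η⁻). -/
open MeasureTheory Real Finset

/-- Two interacting Glauber models (Theorem 5.3 of the paper): under the two
parameter conditions there is a constant `a ∈ (0,2)` such that
`c(α,β;η) ≤ a · M(η)` for every two-component finite configuration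
`η = (η⁺, η⁻)` (a pair of disjoint finite subsets of `ℝ^d`).
Here `E_φ(x,η) = ∑_{y∈η} φ(x−y)` and `C(φ) = ∫ |e^{−φ} − 1|`. -/
theorem statement8 (d : ℕ) (hd : 1 ≤ d)
    (s : ℝ) (hs : s ∈ Set.Icc (0 : ℝ) (1 / 2))
    (zp zm : ℝ) (hzp : 0 < zp) (hzm : 0 < zm)
    (ψp ψm φp φm : (Fin d → ℝ) → ℝ)
    (hψp0 : ∀ x, 0 ≤ ψp x) (hψm0 : ∀ x, 0 ≤ ψm x)
    (hφp0 : ∀ x, 0 ≤ φp x) (hφm0 : ∀ x, 0 ≤ φm x)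
    (hψpsym : ∀ x, ψp (-x) = ψp x) (hψmsym : ∀ x, ψm (-x) = ψm x)
    (hφpsym : ∀ x, φp (-x) = φp x) (hφmsym : ∀ x, φm (-x) = φm x)
    (hψpint : Integrable ψp) (hψmint : Integrable ψm)
    (hφpint : Integrable φp) (hφmint : Integrable φm)
    (α β : ℝ)
    (h1 : exp (exp α * ∫ x, |exp (-(s * ψp x)) - 1|) +
        exp (-β) * zm * exp (exp α * ∫ x, |exp (-((1 - s) * ψp x)) - 1|) *
          exp (exp β * ∫ x, |exp (-(φm x)) - 1|) < 2)
    (h2 : exp (exp β * ∫ x, |exp (-(s * ψm x)) - 1|) +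
        exp (-α) * zp * exp (exp β * ∫ x, |exp (-((1 - s) * ψm x)) - 1|) *
          exp (exp α * ∫ x, |exp (-(φp x)) - 1|) < 2) :
    ∃ a : ℝ, 0 < a ∧ a < 2 ∧
      ∀ ηp ηm : Finset (Fin d → ℝ), Disjoint ηp ηm →
        exp (exp α * ∫ x, |exp (-(s * ψp x)) - 1|) *
            (∑ x ∈ ηm, exp (-(s * ∑ y ∈ ηp, ψp (x - y)))) +
          exp (exp β * ∫ x, |exp (-(s * ψm x)) - 1|) *
            (∑ x ∈ ηp, exp (-(s * ∑ y ∈ ηm, ψm (x - y)))) +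
          exp (-β) * zm * exp (exp α * ∫ x, |exp (-((1 - s) * ψp x)) - 1|) *
            exp (exp β * ∫ x, |exp (-(φm x)) - 1|) *
            (∑ x ∈ ηm, exp (-((1 - s) * ∑ y ∈ ηp, ψp (x - y))) *
              exp (-(∑ y ∈ ηm.erase x, φm (x - y)))) +
          exp (-α) * zp * exp (exp β * ∫ x, |exp (-((1 - s) * ψm x)) - 1|) *
            exp (exp α * ∫ x, |exp (-(φp x)) - 1|) *
            (∑ x ∈ ηp, exp (-((1 - s) * ∑ y ∈ ηm, ψm (x - y))) *
              exp (-(∑ y ∈ ηp.erase x, φp (x - y)))) ≤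
        a * ((∑ x ∈ ηm, exp (-(s * ∑ y ∈ ηp, ψp (x - y)))) +
          (∑ x ∈ ηp, exp (-(s * ∑ y ∈ ηm, ψm (x - y))))) := by
  obtain ⟨hs0, hs12⟩ := hs
  set K1 := exp (exp α * ∫ x, |exp (-(s * ψp x)) - 1|) +
      exp (-β) * zm * exp (exp α * ∫ x, |exp (-((1 - s) * ψp x)) - 1|) *
        exp (exp β * ∫ x, |exp (-(φm x)) - 1|) with hK1
  set K2 := exp (exp β * ∫ x, |exp (-(s * ψm x)) - 1|) +
      exp (-α) * zp * exp (exp β * ∫ x, |exp (-((1 - s) * ψm x)) - 1|) *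
        exp (exp α * ∫ x, |exp (-(φp x)) - 1|) with hK2
  have hK1pos : 0 < K1 := by rw [hK1]; positivity
  refine ⟨max K1 K2, lt_max_of_lt_left hK1pos, max_lt h1 h2, ?_⟩
  intro ηp ηm _
  have hSm : 0 ≤ ∑ x ∈ ηm, exp (-(s * ∑ y ∈ ηp, ψp (x - y))) :=
    Finset.sum_nonneg fun _ _ => (exp_pos _).le
  have hSp : 0 ≤ ∑ x ∈ ηp, exp (-(s * ∑ y ∈ ηm, ψm (x - y))) :=
    Finset.sum_nonneg fun _ _ => (exp_pos _).le
  have key : ∀ (A B : Finset (Fin d → ℝ)) (ψ φ : (Fin d → ℝ) → ℝ),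
      (∀ x, 0 ≤ ψ x) → (∀ x, 0 ≤ φ x) →
      ∑ x ∈ A, exp (-((1 - s) * ∑ y ∈ B, ψ (x - y))) *
          exp (-(∑ y ∈ A.erase x, φ (x - y))) ≤
        ∑ x ∈ A, exp (-(s * ∑ y ∈ B, ψ (x - y))) := by
    intro A B ψ φ hψ hφ
    apply Finset.sum_le_sum
    intro x hx
    have hE : 0 ≤ ∑ y ∈ B, ψ (x - y) := Finset.sum_nonneg fun _ _ => hψ _
    have hT : 0 ≤ ∑ y ∈ A.erase x, φ (x - y) := Finset.sum_nonneg fun _ _ => hφ _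
    calc exp (-((1 - s) * ∑ y ∈ B, ψ (x - y))) * exp (-(∑ y ∈ A.erase x, φ (x - y)))
        ≤ exp (-((1 - s) * ∑ y ∈ B, ψ (x - y))) * 1 := by
          gcongr
          exact exp_le_one_iff.mpr (by linarith)
      _ = exp (-((1 - s) * ∑ y ∈ B, ψ (x - y))) := mul_one _
      _ ≤ exp (-(s * ∑ y ∈ B, ψ (x - y))) := by
          apply exp_le_exp.mpr
          nlinarith
  have h3 := key ηm ηp ψp φm hψp0 hφm0
  have h4 := key ηp ηm ψm φp hψm0 hφp0
  have hK1m : K1 ≤ max K1 K2 := le_max_left _ _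
  have hK2m : K2 ≤ max K1 K2 := le_max_right _ _
  have hB1 : (0:ℝ) ≤ exp (-β) * zm * exp (exp α * ∫ x, |exp (-((1 - s) * ψp x)) - 1|) *
      exp (exp β * ∫ x, |exp (-(φm x)) - 1|) := by positivity
  have hB2 : (0:ℝ) ≤ exp (-α) * zp * exp (exp β * ∫ x, |exp (-((1 - s) * ψm x)) - 1|) *
      exp (exp α * ∫ x, |exp (-(φp x)) - 1|) := by positivity
  nlinarith [mul_le_mul_of_nonneg_left h3 hB1, mul_le_mul_of_nonneg_left h4 hB2,
    mul_le_mul_of_nonneg_right hK1m hSm, mul_le_mul_of_nonneg_right hK2m hSp]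
end

section
/- Consider the density-dependent branching model in a Glauber environment: let m⁺ > 0, z⁻ > 0, and let a⁺, φ⁺, φ⁻, ψ⁻ : ℝ^d → [0,∞) be symmetric (f(−x) = f(x)) and integrable, with φ⁺ and a⁺ bounded and not almost everywhere zero. Fix α, β ∈ ℝ and for a two-component finite configuration η = (η⁺, η⁻) set M(η) = |η⁻| + m⁺ Σ_{x∈η⁺} e^{E_{φ⁺}(x, η⁺∖{x})} and c(η) = |η⁻| + m⁺ e^{e^α C(−φ⁺)} Σ_{x∈η⁺} e^{E_{φ⁺}(x, η⁺∖{x})} + e^{−β} z⁻ e^{e^β C(φ⁻)} Σ_{x∈η⁻} e^{−E_{φ⁻}(x, η⁻∖{x})} + e^{−α} e^{e^β C(ψ⁻)} ( Σ_{x∈η⁺} Σ_{y∈η⁺∖{x}} a⁺(x−y) e^{−E_{ψ⁻}(y, η⁻)} + e^α Σ_{x∈η⁺} ∫_{ℝ^d} a⁺(x−y) e^{−E_{ψ⁻}(y, η⁻)} dy ), where C(−φ⁺) := ∫_{ℝ^d} (e^{φ⁺(y)} − 1) dy. Assume there exist constants ϑ > 0 and b ≥ 0 such that Σ_{x∈η⁺}Σ_{y∈η⁺∖{x}}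 a⁺(x−y) ≤ ϑ Σ_{x∈η⁺}Σ_{y∈η⁺∖{x}} φ⁺(x−y) + b|η⁺| for every finite η⁺ ⊂ ℝ^d, and that e^β > z⁻ exp(e^β C(φ⁻)) and 2 > e^{e^α C(−φ⁺)} + (max{⟨a⁺⟩ + b e^{−α}, ϑ e^{−α}} / m⁺) · e^{e^β C(ψ⁻)}. Then there exists a constant a ∈ (0,2) such that c(η) ≤ a·M(η) for every two-component finite configuration η = (η⁺, η⁻). -/
/-!
Every term of `c(η)` is compared with `M(η)`. The environment part is at most `θ |η⁻|` with
`θ = e^{-β} z⁻ e^{e^β C(φ⁻)} < 1`, since `e^{-E} ≤ 1` for a nonnegative energy `E`. In the birth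
part the weights `e^{-E_{ψ⁻}}` are dropped, the pair sum of `a⁺` is bounded through the domination
hypothesis and the integral by `⟨a⁺⟩`; what remains, `Σ E_{φ⁺}(x, η⁺∖x) + |η⁺|`, is at most
`Σ e^{E_{φ⁺}(x, η⁺∖x)}` because `1 + t ≤ e^t`. Hence `c(η) ≤ a M(η)` with
`a = max (1 + θ) (e^{e^α C(-φ⁺)} + max (⟨a⁺⟩ + b e^{-α}) (ϑ e^{-α}) / m⁺ · e^{e^β C(ψ⁻)})`.
-/

open MeasureTheory Real Finset

section RelativeEnergy

variable {G : Type*} [Sub G]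

def relEnergy (φ : G → ℝ) (x : G) (η : Finset G) : ℝ :=
  ∑ y ∈ η, φ (x - y)

variable {φ : G → ℝ}

lemma relEnergy_nonneg (hφ : ∀ x, 0 ≤ φ x) (x : G) (η : Finset G) : 0 ≤ relEnergy φ x η :=
  sum_nonneg fun _ _ ↦ hφ _

lemma exp_neg_relEnergy_le_one (hφ : ∀ x, 0 ≤ φ x) (x : G) (η : Finset G) :
    exp (-relEnergy φ x η) ≤ 1 :=
  exp_le_one_iff.mpr (neg_nonpos.mpr (relEnergy_nonneg hφ x η))

lemma sum_exp_neg_relEnergy_le_card [DecidableEq G] (hφ : ∀ x, 0 ≤ φ x) (η : Finset G) :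
    ∑ x ∈ η, exp (-relEnergy φ x (η.erase x)) ≤ η.card := by
  simpa using sum_le_sum fun x (_ : x ∈ η) ↦ exp_neg_relEnergy_le_one hφ x (η.erase x)

lemma sum_sum_mul_exp_neg_relEnergy_le [DecidableEq G] {a : G → ℝ} (ha : ∀ x, 0 ≤ a x)
    (hφ : ∀ x, 0 ≤ φ x) (η ζ : Finset G) :
    ∑ x ∈ η, ∑ y ∈ η.erase x, a (x - y) * exp (-relEnergy φ y ζ) ≤
      ∑ x ∈ η, ∑ y ∈ η.erase x, a (x - y) :=
  sum_le_sum fun _ _ ↦ sum_le_sum fun y _ ↦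
    mul_le_of_le_one_right (ha _) (exp_neg_relEnergy_le_one hφ y ζ)

end RelativeEnergy

lemma integral_mul_exp_neg_relEnergy_le {G : Type*} [AddGroup G] [MeasurableSpace G]
    [MeasurableAdd G] [MeasurableNeg G] (μ : Measure G) [μ.IsNegInvariant] [μ.IsAddLeftInvariant]
    {a φ : G → ℝ} (ha : ∀ x, 0 ≤ a x) (hφ : ∀ x, 0 ≤ φ x) (ha_int : Integrable a μ)
    (x : G) (ζ : Finset G) :
    ∫ y, a (x - y) * exp (-relEnergy φ y ζ) ∂μ ≤ ∫ y, a y ∂μ := by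
  calc ∫ y, a (x - y) * exp (-relEnergy φ y ζ) ∂μ ≤ ∫ y, a (x - y) ∂μ :=
        integral_mono_of_nonneg (.of_forall fun y ↦ by have := ha (x - y); positivity)
          (ha_int.comp_sub_left x)
          (.of_forall fun y ↦ mul_le_of_le_one_right (ha _) (exp_neg_relEnergy_le_one hφ y ζ))
    _ = ∫ y, a y ∂μ := integral_sub_left_eq_self a μ x

lemma sum_add_card_le_sum_exp {ι : Type*} (s : Finset ι) (f : ι → ℝ) :
    ∑ i ∈ s, f i + s.card ≤ ∑ i ∈ s, exp (f i) := by
  simpa [sum_add_distrib] using sum_le_sum fun i (_ : i ∈ s) ↦ add_one_le_exp (f i)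

lemma exp_neg_mul_add_exp_mul_le {A B P n I ϑ b α : ℝ} (hP : 0 ≤ P) (hn : 0 ≤ n)
    (hA : A ≤ ϑ * P + b * n) (hB : B ≤ n * I) :
    exp (-α) * (A + exp α * B) ≤ max (I + b * exp (-α)) (ϑ * exp (-α)) * (P + n) := by
  have hα : exp (-α) * exp α = 1 := by rw [← exp_add, neg_add_cancel, exp_zero]
  calc exp (-α) * (A + exp α * B)
      ≤ exp (-α) * (ϑ * P + b * n + exp α * (n * I)) := by gcongr
    _ = ϑ * exp (-α) * P + (I + b * exp (-α)) * n := by linear_combination n * I * hα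
    _ ≤ max (I + b * exp (-α)) (ϑ * exp (-α)) * (P + n) := by
      rw [mul_add]
      gcongr
      exacts [le_max_right _ _, le_max_left _ _]

lemma birth_term_le_mul_sum_exp_relEnergy {G : Type*} [AddGroup G] [DecidableEq G]
    [MeasurableSpace G] [MeasurableAdd G] [MeasurableNeg G] (μ : Measure G) [μ.IsNegInvariant]
    [μ.IsAddLeftInvariant] {a φ ψ : G → ℝ} {ϑ b : ℝ}
    (ha : ∀ x, 0 ≤ a x) (hφ : ∀ x, 0 ≤ φ x) (hψ : ∀ x, 0 ≤ ψ x) (ha_int : Integrable a μ)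
    (hϑ : 0 ≤ ϑ) (α : ℝ) (η ζ : Finset G)
    (ha_dom : ∑ x ∈ η, ∑ y ∈ η.erase x, a (x - y) ≤
      ϑ * ∑ x ∈ η, ∑ y ∈ η.erase x, φ (x - y) + b * η.card) :
    exp (-α) * (∑ x ∈ η, ∑ y ∈ η.erase x, a (x - y) * exp (-relEnergy ψ y ζ) +
        exp α * ∑ x ∈ η, ∫ y, a (x - y) * exp (-relEnergy ψ y ζ) ∂μ) ≤
      max ((∫ x, a x ∂μ) + b * exp (-α)) (ϑ * exp (-α)) *
        ∑ x ∈ η, exp (relEnergy φ x (η.erase x)) := by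
  have hpairs := (sum_sum_mul_exp_neg_relEnergy_le ha hψ η ζ).trans ha_dom
  have hintegrals :
      ∑ x ∈ η, ∫ y, a (x - y) * exp (-relEnergy ψ y ζ) ∂μ ≤ η.card * ∫ x, a x ∂μ := by
    simpa using sum_le_sum fun x (_ : x ∈ η) ↦
      integral_mul_exp_neg_relEnergy_le μ ha hψ ha_int x ζ
  have hmax : 0 ≤ max ((∫ x, a x ∂μ) + b * exp (-α)) (ϑ * exp (-α)) :=
    le_max_of_le_right (by positivity)
  calc _ ≤ _ := exp_neg_mul_add_exp_mul_le
        (sum_nonneg fun x _ ↦ relEnergy_nonneg hφ x _) (Nat.cast_nonneg _) hpairs hintegrals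
    _ ≤ _ := mul_le_mul_of_nonneg_left (sum_add_card_le_sum_exp η _) hmax

lemma add_add_add_le_max_mul {N S T X K θ c e m mp : ℝ} (hmp : 0 < mp) (hN : 0 ≤ N)
    (hS : 0 ≤ S) (hθ : 0 ≤ θ) (hc : 0 ≤ c) (hT : T ≤ N) (hX : e * X ≤ m * S) :
    N + mp * K * S + θ * T + e * c * X ≤ max (1 + θ) (K + m / mp * c) * (N + mp * S) := by
  have hθT : θ * T ≤ θ * N := mul_le_mul_of_nonneg_left hT hθ
  have hcX : c * (e * X) ≤ c * (m * S) := mul_le_mul_of_nonneg_left hX hc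
  calc N + mp * K * S + θ * T + e * c * X ≤ (1 + θ) * N + (K + m / mp * c) * (mp * S) := by
        field_simp
        linarith
    _ ≤ max (1 + θ) (K + m / mp * c) * (N + mp * S) := by
      rw [mul_add]
      gcongr
      exacts [le_max_left _ _, le_max_right _ _]

theorem statement10_general (d : ℕ)
    (mp zm : ℝ) (hmp : 0 < mp) (hzm : 0 < zm)
    (ap φp φm ψm : (Fin d → ℝ) → ℝ)
    (hap0 : ∀ x, 0 ≤ ap x) (hφp0 : ∀ x, 0 ≤ φp x)
    (hφm0 : ∀ x, 0 ≤ φm x) (hψm0 : ∀ x, 0 ≤ ψm x)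
    (hapint : Integrable ap)
    (α β : ℝ) (ϑ b : ℝ) (hϑ : 0 < ϑ)
    (hap_dom : ∀ η : Finset (Fin d → ℝ),
      ∑ x ∈ η, ∑ y ∈ η.erase x, ap (x - y) ≤
        ϑ * ∑ x ∈ η, ∑ y ∈ η.erase x, φp (x - y) + b * η.card)
    (hzm' : exp β > zm * exp (exp β * ∫ x, |exp (-(φm x)) - 1|))
    (hmain : 2 > exp (exp α * ∫ x, (exp (φp x) - 1)) +
        max ((∫ x, ap x) + b * exp (-α)) (ϑ * exp (-α)) / mp *
          exp (exp β * ∫ x, |exp (-(ψm x)) - 1|)) :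
    ∃ a : ℝ, 0 < a ∧ a < 2 ∧
      ∀ ηp ηm : Finset (Fin d → ℝ), Disjoint ηp ηm →
        (ηm.card : ℝ) +
          mp * exp (exp α * ∫ x, (exp (φp x) - 1)) *
            (∑ x ∈ ηp, exp (∑ y ∈ ηp.erase x, φp (x - y))) +
          exp (-β) * zm * exp (exp β * ∫ x, |exp (-(φm x)) - 1|) *
            (∑ x ∈ ηm, exp (-(∑ y ∈ ηm.erase x, φm (x - y)))) +
          exp (-α) * exp (exp β * ∫ x, |exp (-(ψm x)) - 1|) *
            ((∑ x ∈ ηp, ∑ y ∈ ηp.erase x,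
                ap (x - y) * exp (-(∑ w ∈ ηm, ψm (y - w)))) +
              exp α * ∑ x ∈ ηp, ∫ y : Fin d → ℝ,
                ap (x - y) * exp (-(∑ w ∈ ηm, ψm (y - w)))) ≤
        a * ((ηm.card : ℝ) +
          mp * (∑ x ∈ ηp, exp (∑ y ∈ ηp.erase x, φp (x - y)))) := by
  set θ := exp (-β) * zm * exp (exp β * ∫ x, |exp (-(φm x)) - 1|)
  have hθ0 : 0 < θ := by positivity
  have hθ1 : θ < 1 := by
    rw [show θ = zm * exp (exp β * ∫ x, |exp (-(φm x)) - 1|) / exp β by simp [θ, exp_neg]; ring]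
    exact (div_lt_one (exp_pos β)).mpr hzm'
  refine ⟨max (1 + θ) _, lt_max_of_lt_left (by linarith), max_lt (by linarith) hmain,
    fun ηp ηm _ ↦ ?_⟩
  exact add_add_add_le_max_mul hmp (Nat.cast_nonneg _) (sum_nonneg fun _ _ ↦ (exp_pos _).le)
    hθ0.le (exp_pos _).le (sum_exp_neg_relEnergy_le_card hφm0 ηm)
    (birth_term_le_mul_sum_exp_relEnergy volume hap0 hφp0 hψm0 hapint hϑ.le α ηp ηm (hap_dom ηp))

/-- Density dependent branching in Glauber environment (Theorem 5.7 of the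
paper): under the stated domination and parameter conditions there is a
constant `a ∈ (0,2)` such that `c(α,β;η) ≤ a · M(η)` for every two-component
finite configuration `η = (η⁺, η⁻)` (a pair of disjoint finite subsets of
`ℝ^d`). Here `E_φ(x,η) = ∑_{y∈η} φ(x−y)`, `C(φ) = ∫ |e^{−φ} − 1|` and
`C(−φ⁺) = ∫ (e^{φ⁺} − 1)`. -/
theorem statement10 (d : ℕ) (hd : 1 ≤ d)
    (mp zm : ℝ) (hmp : 0 < mp) (hzm : 0 < zm)
    (ap φp φm ψm : (Fin d → ℝ) → ℝ)
    (hap0 : ∀ x, 0 ≤ ap x) (hφp0 : ∀ x, 0 ≤ φp x)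
    (hφm0 : ∀ x, 0 ≤ φm x) (hψm0 : ∀ x, 0 ≤ ψm x)
    (hapsym : ∀ x, ap (-x) = ap x) (hφpsym : ∀ x, φp (-x) = φp x)
    (hφmsym : ∀ x, φm (-x) = φm x) (hψmsym : ∀ x, ψm (-x) = ψm x)
    (hapint : Integrable ap) (hφpint : Integrable φp)
    (hφmint : Integrable φm) (hψmint : Integrable ψm)
    (hapbdd : ∃ C, ∀ x, ap x ≤ C) (hφpbdd : ∃ C, ∀ x, φp x ≤ C)
    (hapne : ¬ (ap =ᵐ[volume] 0)) (hφpne : ¬ (φp =ᵐ[volume] 0))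
    (α β : ℝ) (ϑ b : ℝ) (hϑ : 0 < ϑ) (hb : 0 ≤ b)
    (hap_dom : ∀ η : Finset (Fin d → ℝ),
      ∑ x ∈ η, ∑ y ∈ η.erase x, ap (x - y) ≤
        ϑ * ∑ x ∈ η, ∑ y ∈ η.erase x, φp (x - y) + b * η.card)
    (hzm' : exp β > zm * exp (exp β * ∫ x, |exp (-(φm x)) - 1|))
    (hmain : 2 > exp (exp α * ∫ x, (exp (φp x) - 1)) +
        max ((∫ x, ap x) + b * exp (-α)) (ϑ * exp (-α)) / mp *
          exp (exp β * ∫ x, |exp (-(ψm x)) - 1|)) :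
    ∃ a : ℝ, 0 < a ∧ a < 2 ∧
      ∀ ηp ηm : Finset (Fin d → ℝ), Disjoint ηp ηm →
        (ηm.card : ℝ) +
          mp * exp (exp α * ∫ x, (exp (φp x) - 1)) *
            (∑ x ∈ ηp, exp (∑ y ∈ ηp.erase x, φp (x - y))) +
          exp (-β) * zm * exp (exp β * ∫ x, |exp (-(φm x)) - 1|) *
            (∑ x ∈ ηm, exp (-(∑ y ∈ ηm.erase x, φm (x - y)))) +
          exp (-α) * exp (exp β * ∫ x, |exp (-(ψm x)) - 1|) *
            ((∑ x ∈ ηp, ∑ y ∈ ηp.erase x,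
                ap (x - y) * exp (-(∑ w ∈ ηm, ψm (y - w)))) +
              exp α * ∑ x ∈ ηp, ∫ y : Fin d → ℝ,
                ap (x - y) * exp (-(∑ w ∈ ηm, ψm (y - w)))) ≤
        a * ((ηm.card : ℝ) +
          mp * (∑ x ∈ ηp, exp (∑ y ∈ ηp.erase x, φp (x - y)))) :=
  statement10_general d mp zm hmp hzm ap φp φm ψm hap0 hφp0 hφm0 hψm0 hapint α β ϑ b hϑ hap_dom hzm'
    hmain
end

section
/- Let φ⁺, φ⁻, ψ⁺, ψ⁻ : ℝ^d → [0,∞) be measurable and integrable, z⁺, z⁻ > 0, and let ρ_t⁺(x), ρ_t⁻(x) be jointly measurable, bounded functions of (t, x) ∈ [0,∞) × ℝ^d such that for each x the maps t ↦ ρ_t^±(x) are differentiable and satisfy the kinetic (Vlasov) equations of the two-interacting Glauber (Widom–Rowlinson-type) model: ∂ρ_t⁻/∂t(x) = −ρ_t⁻(x) + z⁻ e^{−(φ⁻ ∗ ρ_t⁻)(x)} e^{−(ψ⁺ ∗ ρ_t⁺)(x)} and ∂ρ_t⁺/∂t(x) = −ρ_t⁺(x) + z⁺ e^{−(φ⁺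 ∗ ρ_t⁺)(x)} e^{−(ψ⁻ ∗ ρ_t⁻)(x)}. Then for every two-component finite configuration η = (η⁺, η⁻), the product function r_t(η) := (∏_{x∈η⁺} ρ_t⁺(x)) · (∏_{x∈η⁻} ρ_t⁻(x)) is differentiable in t and satisfies ∂r_t(η)/∂t = −(|η⁺| + |η⁻|) r_t(η) + Σ_{x∈η⁺} z⁺ e^{−(φ⁺ ∗ ρ_t⁺)(x)} e^{−(ψ⁻ ∗ ρ_t⁻)(x)} (∏_{y∈η⁺∖{x}} ρ_t⁺(y)) (∏_{y∈η⁻} ρ_t⁻(y)) + Σ_{x∈η⁻} z⁻ e^{−(φ⁻ ∗ ρ_t⁻)(x)} e^{−(ψ⁺ ∗ ρ_t⁺)(x)} (∏_{y∈η⁺} ρ_t⁺(y)) (∏_{y∈η⁻∖{x}} ρ_t⁻(y)). -/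
open MeasureTheory Real Finset

section BirthDeath

variable {𝕜 𝔸 ι : Type*} [NontriviallyNormedField 𝕜] [NormedCommRing 𝔸] [NormedAlgebra 𝕜 𝔸]
  [DecidableEq ι] {u : Finset ι} {f : ι → 𝕜 → 𝔸} {g : ι → 𝔸} {s : Set 𝕜} {t : 𝕜}

/-- By the Leibniz rule each factor's decay term `-f i t` reproduces the whole product, so the
decays add up to `-#u` times it. -/
theorem HasDerivWithinAt.finsetProd_of_neg_add
    (hf : ∀ i ∈ u, HasDerivWithinAt (f i) (-f i t + g i) s t) :
    HasDerivWithinAt (∏ i ∈ u, f i ·)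
      (-(#u : 𝔸) * ∏ i ∈ u, f i t + ∑ i ∈ u, g i * ∏ j ∈ u.erase i, f j t) s t := by
  refine (HasDerivWithinAt.fun_finsetProd hf).congr_deriv ?_
  have decay : ∀ i ∈ u, (∏ j ∈ u.erase i, f j t) * -f i t = -∏ j ∈ u, f j t := fun i hi => by
    rw [mul_neg, prod_erase_mul _ _ hi]
  simp only [smul_eq_mul, mul_add, sum_add_distrib, sum_congr rfl decay, sum_const, nsmul_eq_mul]
  simp only [mul_comm (∏ j ∈ u.erase _, f j t), neg_mul, mul_neg]

end BirthDeath

theorem statement11_general (d : ℕ)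
    (φp φm ψp ψm : (Fin d → ℝ) → ℝ)
    (zp zm : ℝ)
    (ρp ρm : ℝ → (Fin d → ℝ) → ℝ)
    (hodem : ∀ x, ∀ t ∈ Set.Ici (0 : ℝ),
      HasDerivWithinAt (fun τ => ρm τ x)
        (-(ρm t x) + zm * exp (-(∫ y, φm (x - y) * ρm t y)) *
          exp (-(∫ y, ψp (x - y) * ρp t y))) (Set.Ici 0) t)
    (hodep : ∀ x, ∀ t ∈ Set.Ici (0 : ℝ),
      HasDerivWithinAt (fun τ => ρp τ x)
        (-(ρp t x) + zp * exp (-(∫ y, φp (x - y) * ρp t y)) *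
          exp (-(∫ y, ψm (x - y) * ρm t y))) (Set.Ici 0) t) :
    ∀ ηp ηm : Finset (Fin d → ℝ), Disjoint ηp ηm → ∀ t ∈ Set.Ici (0 : ℝ),
      HasDerivWithinAt
        (fun τ => (∏ x ∈ ηp, ρp τ x) * ∏ x ∈ ηm, ρm τ x)
        (-(((ηp.card : ℝ) + (ηm.card : ℝ))) *
            ((∏ x ∈ ηp, ρp t x) * ∏ x ∈ ηm, ρm t x) +
          (∑ x ∈ ηp, zp * exp (-(∫ y, φp (x - y) * ρp t y)) *
              exp (-(∫ y, ψm (x - y) * ρm t y)) *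
              ((∏ y ∈ ηp.erase x, ρp t y) * ∏ y ∈ ηm, ρm t y)) +
          (∑ x ∈ ηm, zm * exp (-(∫ y, φm (x - y) * ρm t y)) *
              exp (-(∫ y, ψp (x - y) * ρp t y)) *
              ((∏ y ∈ ηp, ρp t y) * ∏ y ∈ ηm.erase x, ρm t y)))
        (Set.Ici 0) t := by
  intro ηp ηm _ t ht
  have hp := HasDerivWithinAt.finsetProd_of_neg_add (u := ηp) fun x _ => hodep x t ht
  have hm := HasDerivWithinAt.finsetProd_of_neg_add (u := ηm) fun x _ => hodem x t ht
  refine (hp.mul hm).congr_deriv ?_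
  simp only [add_mul, mul_add, sum_mul, mul_sum, mul_assoc, mul_left_comm (∏ y ∈ ηp, ρp t y)]
  ring

/-- Vlasov scaling of the two-interacting Glauber (Widom–Rowlinson-type) model,
an instance of Theorem 4.2(3): if the bounded, jointly measurable densities
`ρ_t^±` solve the kinetic equations (5.4)–(5.5), then for every two-component
finite configuration `η = (η⁺, η⁻)` the Lebesgue–Poisson exponential
`r_t(η) = ∏_{x∈η⁺} ρ_t⁺(x) · ∏_{x∈η⁻} ρ_t⁻(x)` is differentiable in `t` and
solves the limiting hierarchy. Here `(f ∗ g)(x) = ∫ f(x−y) g(y) dy`. -/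
theorem statement11 (d : ℕ) (hd : 1 ≤ d)
    (φp φm ψp ψm : (Fin d → ℝ) → ℝ)
    (hφp0 : ∀ x, 0 ≤ φp x) (hφm0 : ∀ x, 0 ≤ φm x)
    (hψp0 : ∀ x, 0 ≤ ψp x) (hψm0 : ∀ x, 0 ≤ ψm x)
    (hφpmeas : Measurable φp) (hφmmeas : Measurable φm)
    (hψpmeas : Measurable ψp) (hψmmeas : Measurable ψm)
    (hφpint : Integrable φp) (hφmint : Integrable φm)
    (hψpint : Integrable ψp) (hψmint : Integrable ψm)
    (zp zm : ℝ) (hzp : 0 < zp) (hzm : 0 < zm)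
    (ρp ρm : ℝ → (Fin d → ℝ) → ℝ)
    (hρpmeas : Measurable (Function.uncurry ρp))
    (hρmmeas : Measurable (Function.uncurry ρm))
    (hρpbdd : ∃ C, ∀ t ∈ Set.Ici (0 : ℝ), ∀ x, |ρp t x| ≤ C)
    (hρmbdd : ∃ C, ∀ t ∈ Set.Ici (0 : ℝ), ∀ x, |ρm t x| ≤ C)
    (hodem : ∀ x, ∀ t ∈ Set.Ici (0 : ℝ),
      HasDerivWithinAt (fun τ => ρm τ x)
        (-(ρm t x) + zm * exp (-(∫ y, φm (x - y) * ρm t y)) *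
          exp (-(∫ y, ψp (x - y) * ρp t y))) (Set.Ici 0) t)
    (hodep : ∀ x, ∀ t ∈ Set.Ici (0 : ℝ),
      HasDerivWithinAt (fun τ => ρp τ x)
        (-(ρp t x) + zp * exp (-(∫ y, φp (x - y) * ρp t y)) *
          exp (-(∫ y, ψm (x - y) * ρm t y))) (Set.Ici 0) t) :
    ∀ ηp ηm : Finset (Fin d → ℝ), Disjoint ηp ηm → ∀ t ∈ Set.Ici (0 : ℝ),
      HasDerivWithinAt
        (fun τ => (∏ x ∈ ηp, ρp τ x) * ∏ x ∈ ηm, ρm τ x)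
        (-(((ηp.card : ℝ) + (ηm.card : ℝ))) *
            ((∏ x ∈ ηp, ρp t x) * ∏ x ∈ ηm, ρm t x) +
          (∑ x ∈ ηp, zp * exp (-(∫ y, φp (x - y) * ρp t y)) *
              exp (-(∫ y, ψm (x - y) * ρm t y)) *
              ((∏ y ∈ ηp.erase x, ρp t y) * ∏ y ∈ ηm, ρm t y)) +
          (∑ x ∈ ηm, zm * exp (-(∫ y, φm (x - y) * ρm t y)) *
              exp (-(∫ y, ψp (x - y) * ρp t y)) *
              ((∏ y ∈ ηp, ρp t y) * ∏ y ∈ ηm.erase x, ρm t y)))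
        (Set.Ici 0) t :=
  statement11_general d φp φm ψp ψm zp zm ρp ρm hodem hodep
end
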